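/- Let n ≥ 1 and let A be a real 4×n matrix. Let Δₙ, Δ₄ and P be as above, and define the lower value v̲ = sup over p ∈ P of min over columns j of (pᵀA)ⱼ, and the upper value v̄ = inf over q ∈ Δₙ of sup over p ∈ P of pᵀ A q. Then v̲ = v̄ if and only if there exists p ∈ P with min over j of (pᵀA)ⱼ equal to the maximum over p' ∈ Δ₄ of min over j of (p'ᵀA)ⱼ, i.e., if and only if the maximum of p ↦ min_j (pᵀA)ⱼ over Δ₄ is attained at a point of product form. -/

import Mathlib

/-!
Every vertex of `Δ₄` is a product mixture, so against any `q` the coalition restricted to `P` has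
the same best reply value `maxᵢ (A q)ᵢ` as an unrestricted row player. The upper value is therefore
that of the ordinary matrix game, which by von Neumann's minimax theorem (a case of Sion's) is
`max_{p ∈ Δ₄} minⱼ (pᵀA)ⱼ`. On the other side, the lower value is a maximum over the compact set
`P ⊆ Δ₄`, so it reaches that value iff some point of `P` does.
-/

open Matrix

noncomputable def prodMix (p₁ p₂ : ℝ) : Fin 4 → ℝ :=
  ![(1 - p₁) * (1 - p₂), (1 - p₁) * p₂, p₁ * (1 - p₂), p₁ * p₂]

def productMixtures : Set (Fin 4 → ℝ) :=
  {p | ∃ p₁ ∈ Set.Icc (0 : ℝ) 1, ∃ p₂ ∈ Set.Icc (0 : ℝ) 1, p = prodMix p₁ p₂}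

section Simplex

variable {ι : Type*} [Fintype ι]

theorem exists_dotProduct_le_apply_of_mem_stdSimplex {p : ι → ℝ} (hp : p ∈ stdSimplex ℝ ι)
    (x : ι → ℝ) : ∃ i, p ⬝ᵥ x ≤ x i := by
  have : Nonempty ι := by
    by_contra h
    simpa [not_nonempty_iff.mp h] using hp.2
  obtain ⟨i, hi⟩ := Finite.exists_max x
  refine ⟨i, ?_⟩
  calc p ⬝ᵥ x = ∑ j, p j * x j := rfl
    _ ≤ ∑ j, p j * x i := by gcongr with j; exacts [hp.1 j, hi j]
    _ = x i := by rw [← Finset.sum_mul, hp.2, one_mul]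

theorem exists_apply_le_dotProduct_of_mem_stdSimplex {q : ι → ℝ} (hq : q ∈ stdSimplex ℝ ι)
    (y : ι → ℝ) : ∃ i, y i ≤ y ⬝ᵥ q := by
  obtain ⟨i, hi⟩ := exists_dotProduct_le_apply_of_mem_stdSimplex hq (-y)
  exact ⟨i, by simpa [dotProduct_comm] using hi⟩

end Simplex

section MatrixGame

variable {ι κ : Type*} [Fintype ι] [Fintype κ] (A : Matrix ι κ ℝ)

theorem iInf_vecMul_le_dotProduct_mulVec {p q} (hq : q ∈ stdSimplex ℝ κ) :
    ⨅ j, (p ᵥ* A) j ≤ p ⬝ᵥ A *ᵥ q := by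
  obtain ⟨j, hj⟩ := exists_apply_le_dotProduct_of_mem_stdSimplex hq (p ᵥ* A)
  rw [dotProduct_mulVec]
  exact (ciInf_le (Finite.bddBelow_range _) j).trans hj

theorem exists_isSaddlePointOn_dotProduct_mulVec [Nonempty ι] [Nonempty κ] :
    ∃ q ∈ stdSimplex ℝ κ, ∃ p ∈ stdSimplex ℝ ι,
      IsSaddlePointOn (stdSimplex ℝ κ) (stdSimplex ℝ ι) (fun q p ↦ p ⬝ᵥ A *ᵥ q) q p := by
  classical
  have hcont : Continuous fun x : (κ → ℝ) × (ι → ℝ) ↦ x.2 ⬝ᵥ A *ᵥ x.1 := by fun_prop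
  refine Sion.exists_isSaddlePointOn'
    (ne_X := ⟨_, single_mem_stdSimplex ℝ (Classical.arbitrary κ)⟩)
    (ne_Y := ⟨_, single_mem_stdSimplex ℝ (Classical.arbitrary ι)⟩)
    (kX := isCompact_stdSimplex ℝ κ) (kY := isCompact_stdSimplex ℝ ι)
    (cX := convex_stdSimplex ℝ κ) (cY := convex_stdSimplex ℝ ι)
    (hfy := fun p _ ↦ ?_) (hfy' := fun p _ ↦ ?_) (hfx := fun q _ ↦ ?_) (hfx' := fun q _ ↦ ?_)
  · exact (hcont.comp (.prodMk_left p)).lowerSemicontinuous.lowerSemicontinuousOn _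
  · exact ((dotProductBilin ℝ ℝ p).comp A.mulVecLin).convexOn (convex_stdSimplex ℝ κ)
      |>.quasiconvexOn
  · exact (hcont.comp (.prodMk_right q)).upperSemicontinuous.upperSemicontinuousOn _
  · exact ((dotProductBilin ℝ ℝ).flip (A *ᵥ q)).concaveOn (convex_stdSimplex ℝ ι)
      |>.quasiconcaveOn

theorem continuous_iInf_vecMul [Nonempty κ] : Continuous fun p : ι → ℝ ↦ ⨅ j, (p ᵥ* A) j := by
  simp_rw [← Finset.inf'_univ_eq_ciInf]
  exact Continuous.finset_inf'_apply _ fun j _ ↦ by fun_prop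

theorem iInf_vecMul_le_iSup_dotProduct_mulVec [DecidableEq ι] {S : Set (ι → ℝ)}
    (hS : S ⊆ stdSimplex ℝ ι) (hsingle : ∀ i, Pi.single i 1 ∈ S) {p q}
    (hp : p ∈ stdSimplex ℝ ι) (hq : q ∈ stdSimplex ℝ κ) :
    ⨅ j, (p ᵥ* A) j ≤ ⨆ p' : S, (p' : ι → ℝ) ⬝ᵥ A *ᵥ q := by
  have hbdd : BddAbove (Set.range fun p' : S ↦ (p' : ι → ℝ) ⬝ᵥ A *ᵥ q) := by
    refine ⟨⨆ i, (A *ᵥ q) i, Set.forall_mem_range.2 fun p' ↦ ?_⟩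
    obtain ⟨i, hi⟩ := exists_dotProduct_le_apply_of_mem_stdSimplex (hS p'.2) (A *ᵥ q)
    exact hi.trans (le_ciSup (Finite.bddAbove_range _) i)
  obtain ⟨i, hi⟩ := exists_dotProduct_le_apply_of_mem_stdSimplex hp (A *ᵥ q)
  calc ⨅ j, (p ᵥ* A) j ≤ p ⬝ᵥ A *ᵥ q := iInf_vecMul_le_dotProduct_mulVec A hq
    _ ≤ (A *ᵥ q) i := hi
    _ = Pi.single i 1 ⬝ᵥ A *ᵥ q := by simp
    _ ≤ _ := le_ciSup hbdd ⟨_, hsingle i⟩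

theorem iInf_iSup_dotProduct_mulVec_eq_iSup_iInf_vecMul [Nonempty ι] [Nonempty κ] [DecidableEq ι]
    {S : Set (ι → ℝ)} (hS : S ⊆ stdSimplex ℝ ι) (hsingle : ∀ i, Pi.single i 1 ∈ S) :
    (⨅ q : stdSimplex ℝ κ, ⨆ p : S, (p : ι → ℝ) ⬝ᵥ A *ᵥ (q : κ → ℝ)) =
      ⨆ p : stdSimplex ℝ ι, ⨅ j, ((p : ι → ℝ) ᵥ* A) j := by
  classical
  obtain ⟨q₀, hq₀, p₀, hp₀, hsaddle⟩ := exists_isSaddlePointOn_dotProduct_mulVec A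
  have : Nonempty S := ⟨⟨_, hsingle (Classical.arbitrary ι)⟩⟩
  -- both sides equal the payoff `v` guaranteed by the saddle strategy `p₀`
  set v := ⨅ j, (p₀ ᵥ* A) j
  have hmax : ∀ p ∈ stdSimplex ℝ ι, p ⬝ᵥ A *ᵥ q₀ ≤ v := fun p hp ↦ le_ciInf fun j ↦ by
    have : p ⬝ᵥ A *ᵥ q₀ ≤ p₀ ⬝ᵥ A *ᵥ Pi.single j 1 := hsaddle _ (single_mem_stdSimplex ℝ j) p hp
    rwa [dotProduct_mulVec p₀, dotProduct_single, mul_one] at this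
  have hmin : ∀ q : stdSimplex ℝ κ, v ≤ ⨆ p : S, (p : ι → ℝ) ⬝ᵥ A *ᵥ (q : κ → ℝ) := fun q ↦
    iInf_vecMul_le_iSup_dotProduct_mulVec A hS hsingle hp₀ q.2
  have hvalue : ∀ p : stdSimplex ℝ ι, ⨅ j, ((p : ι → ℝ) ᵥ* A) j ≤ v := fun p ↦
    (iInf_vecMul_le_dotProduct_mulVec A hq₀).trans (hmax p p.2)
  have : Nonempty (stdSimplex ℝ κ) := ⟨⟨q₀, hq₀⟩⟩
  calc (⨅ q : stdSimplex ℝ κ, ⨆ p : S, (p : ι → ℝ) ⬝ᵥ A *ᵥ (q : κ → ℝ))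
      = v := le_antisymm
        ((ciInf_le ⟨v, Set.forall_mem_range.2 hmin⟩ ⟨q₀, hq₀⟩).trans
          (ciSup_le fun p ↦ hmax p (hS p.2)))
        (le_ciInf hmin)
    _ = ⨆ p : stdSimplex ℝ ι, ⨅ j, ((p : ι → ℝ) ᵥ* A) j := le_antisymm
        (le_ciSup ⟨v, Set.forall_mem_range.2 hvalue⟩ ⟨p₀, hp₀⟩)
        (ciSup_le hvalue)

end MatrixGame

theorem iSup_subtype_eq_iff_exists_eq {X α : Type*} [TopologicalSpace X]
    [ConditionallyCompleteLinearOrder α] [TopologicalSpace α] [ClosedIciTopology α] {g : X → α}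
    {S T : Set X} (hST : S ⊆ T) (hS : IsCompact S) (hSne : S.Nonempty) (hT : IsCompact T)
    (hg : ContinuousOn g T) :
    (⨆ x : S, g x) = (⨆ x : T, g x) ↔ ∃ x ∈ S, g x = ⨆ x : T, g x := by
  obtain ⟨x₀, hx₀, hmax⟩ := hS.exists_isMaxOn hSne (hg.mono hST)
  have hbdd : BddAbove (Set.range fun x : T ↦ g x) := by
    rw [← Set.image_eq_range]
    exact hT.bddAbove_image hg
  rw [hmax.iSup_eq hx₀]
  refine ⟨fun h ↦ ⟨x₀, hx₀, h⟩, fun ⟨x, hx, hgx⟩ ↦ ?_⟩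
  exact le_antisymm (le_ciSup hbdd ⟨x₀, hST hx₀⟩) (hgx ▸ hmax hx)

theorem prodMix_mem_stdSimplex {a b : ℝ} (ha : a ∈ Set.Icc (0 : ℝ) 1) (hb : b ∈ Set.Icc (0 : ℝ) 1) :
    prodMix a b ∈ stdSimplex ℝ (Fin 4) := by
  obtain ⟨ha₀, ha₁⟩ := ha
  obtain ⟨hb₀, hb₁⟩ := hb
  refine ⟨fun i ↦ ?_, ?_⟩
  · fin_cases i <;> simp [prodMix] <;> nlinarith
  · simp [Fin.sum_univ_four, prodMix]
    ring

theorem productMixtures_subset_stdSimplex : productMixtures ⊆ stdSimplex ℝ (Fin 4) := by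
  rintro p ⟨a, ha, b, hb, rfl⟩
  exact prodMix_mem_stdSimplex ha hb

theorem single_mem_productMixtures (i : Fin 4) : Pi.single i 1 ∈ productMixtures := by
  fin_cases i
  · exact ⟨0, by simp, 0, by simp, by ext j; fin_cases j <;> simp [prodMix]⟩
  · exact ⟨0, by simp, 1, by simp, by ext j; fin_cases j <;> simp [prodMix]⟩
  · exact ⟨1, by simp, 0, by simp, by ext j; fin_cases j <;> simp [prodMix]⟩
  · exact ⟨1, by simp, 1, by simp, by ext j; fin_cases j <;> simp [prodMix]⟩

theorem isCompact_productMixtures : IsCompact productMixtures := by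
  have : productMixtures = (fun z : ℝ × ℝ ↦ prodMix z.1 z.2) '' Set.Icc 0 1 ×ˢ Set.Icc 0 1 := by
    ext p
    constructor
    · rintro ⟨a, ha, b, hb, rfl⟩
      exact ⟨(a, b), ⟨ha, hb⟩, rfl⟩
    · rintro ⟨⟨a, b⟩, ⟨ha, hb⟩, rfl⟩
      exact ⟨a, ha, b, hb, rfl⟩
  rw [this]
  exact (isCompact_Icc.prod isCompact_Icc).image (by unfold prodMix; fun_prop)

/-- The lower value `v̲ = sup_{p ∈ P} min_j (pᵀA)ⱼ` equals the upper value
`v̄ = inf_{q ∈ Δₙ} sup_{p ∈ P} pᵀAq` if and only if the maximum over `Δ₄` of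
`p ↦ min_j (pᵀA)ⱼ` is attained at a point of product form. -/
theorem lowerValue_eq_upperValue_iff (n : ℕ) (hn : 1 ≤ n)
    (A : Matrix (Fin 4) (Fin n) ℝ) :
    (⨆ p : productMixtures, ⨅ j : Fin n, Matrix.vecMul (p : Fin 4 → ℝ) A j) =
      (⨅ q : stdSimplex ℝ (Fin n), ⨆ p : productMixtures,
        (p : Fin 4 → ℝ) ⬝ᵥ A.mulVec (q : Fin n → ℝ)) ↔
    ∃ p ∈ productMixtures,
      (⨅ j : Fin n, Matrix.vecMul p A j) =
        ⨆ p' : stdSimplex ℝ (Fin 4), ⨅ j : Fin n,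
          Matrix.vecMul (p' : Fin 4 → ℝ) A j := by
  have : Nonempty (Fin n) := ⟨⟨0, hn⟩⟩
  rw [iInf_iSup_dotProduct_mulVec_eq_iSup_iInf_vecMul A productMixtures_subset_stdSimplex
    single_mem_productMixtures]
  exact iSup_subtype_eq_iff_exists_eq productMixtures_subset_stdSimplex isCompact_productMixtures
    ⟨_, single_mem_productMixtures 0⟩ (isCompact_stdSimplex ℝ _)
    (continuous_iInf_vecMul A).continuousOn
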